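/- arXiv:2512.10129 — 2 statements merged into one kernel-verified Lean document; each statement's English description precedes it below -/
import Mathlib

section
/- Let M and N be unital C*-algebras and let φ : M → N be a contractive positive linear map. Then for every x ∈ M, φ(x)* ∘ φ(x) ≤ φ(x* ∘ x), where a ∘ b = (ab + ba)/2 denotes the Jordan product. -/
lemma ozawa_aux_sq_le {A : Type*} [CStarAlgebra A] [PartialOrder A] [StarOrderedRing A]
    {n : ℕ} (q : Fin n → A) (lam : Fin n → ℝ)
    (hq : ∀ i, 0 ≤ q i) (hs : (∑ i, q i) ≤ 1) :
    (∑ i, lam i • q i) * (∑ i, lam i • q i) ≤ ∑ i, (lam i)^2 • q i := by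
  set b : A := ∑ i, lam i • q i with hb_def
  have hqsa : ∀ i, IsSelfAdjoint (q i) := fun i => (hq i).isSelfAdjoint
  have hb : IsSelfAdjoint b := by
    rw [hb_def, IsSelfAdjoint, star_sum]
    exact Finset.sum_congr rfl fun i _ => by
      rw [star_smul, star_trivial, (hqsa i).star_eq]
  have expand : ∀ i, (lam i • (1:A) - b) * q i * (lam i • (1:A) - b)
      = (lam i)^2 • q i - lam i • (b * q i) - lam i • (q i * b) + b * q i * b := by
    intro i
    simp only [sub_mul, mul_sub, smul_mul_assoc, mul_smul_comm, smul_smul, one_mul, mul_one,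
      ← sq]
    module
  have h1 : (∑ i, lam i • (b * q i)) = b * b := by
    simp only [← mul_smul_comm]
    rw [← Finset.mul_sum, ← hb_def]
  have h2 : (∑ i, lam i • (q i * b)) = b * b := by
    simp only [← smul_mul_assoc]
    rw [← Finset.sum_mul, ← hb_def]
  have h3 : (∑ i, b * q i * b) = b * (∑ i, q i) * b := by
    simp only [mul_assoc]
    rw [← Finset.mul_sum, ← Finset.sum_mul]
  have key : (∑ i, (lam i)^2 • q i) - b * b
      = (∑ i, (lam i • (1:A) - b) * q i * (lam i • (1:A) - b))
        + b * (1 - ∑ i, q i) * b := by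
    rw [Finset.sum_congr rfl fun i _ => expand i]
    rw [Finset.sum_add_distrib, Finset.sum_sub_distrib, Finset.sum_sub_distrib, h1, h2, h3,
      mul_sub, sub_mul, mul_one]
    abel
  have pos1 : (0:A) ≤ ∑ i, (lam i • (1:A) - b) * q i * (lam i • (1:A) - b) := by
    refine Finset.sum_nonneg fun i _ => ?_
    have h1sa : IsSelfAdjoint (lam i • (1:A)) := by
      rw [IsSelfAdjoint, star_smul, star_trivial, star_one]
    have hd : IsSelfAdjoint (lam i • (1:A) - b) := h1sa.sub hb
    exact IsSelfAdjoint.conjugate_nonneg (hq i) hd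
  have pos2 : (0:A) ≤ b * (1 - ∑ i, q i) * b :=
    IsSelfAdjoint.conjugate_nonneg (sub_nonneg.2 hs) hb
  have h0 := add_nonneg pos1 pos2
  rw [← key] at h0
  exact sub_nonneg.mp h0

noncomputable def ozGstep (r h : ℝ) (k : ℕ) (t : ℝ) : ℝ :=
  max 0 (min 1 ((-r + k * h - t) / h))

noncomputable def ozTent (r h : ℝ) (k : ℕ) (t : ℝ) : ℝ :=
  ozGstep r h (k + 1) t - ozGstep r h k t

lemma ozGstep_continuous (r h : ℝ) (k : ℕ) : Continuous (ozGstep r h k) := by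
  unfold ozGstep
  exact continuous_const.max (continuous_const.min
    ((continuous_const.sub continuous_id).div_const h))

lemma ozTent_continuous (r h : ℝ) (k : ℕ) : Continuous (ozTent r h k) :=
  (ozGstep_continuous r h (k + 1)).sub (ozGstep_continuous r h k)

lemma ozGstep_mono (r h : ℝ) (hh : 0 < h) (k : ℕ) (t : ℝ) :
    ozGstep r h k t ≤ ozGstep r h (k + 1) t := by
  unfold ozGstep
  have : (-r + k * h - t) / h ≤ (-r + (k + 1 : ℕ) * h - t) / h := by
    gcongr
    exact Nat.le_succ k
  exact max_le_max le_rfl (min_le_min le_rfl this)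

lemma ozTent_nonneg (r h : ℝ) (hh : 0 < h) (k : ℕ) (t : ℝ) :
    0 ≤ ozTent r h k t := sub_nonneg.2 (ozGstep_mono r h hh k t)

lemma ozGstep_eq_one (r h : ℝ) (hh : 0 < h) {k : ℕ} {t : ℝ}
    (ht : t ≤ -r + k * h - h) : ozGstep r h k t = 1 := by
  unfold ozGstep
  rw [min_eq_left, max_eq_right zero_le_one]
  rw [le_div_iff₀ hh]
  linarith

lemma ozGstep_eq_zero (r h : ℝ) (hh : 0 < h) {k : ℕ} {t : ℝ}
    (ht : -r + k * h ≤ t) : ozGstep r h k t = 0 := by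
  unfold ozGstep
  rw [max_eq_left]
  refine (min_le_right _ _).trans ?_
  rw [div_nonpos_iff]
  right; constructor <;> linarith

lemma ozTent_support (r h : ℝ) (hh : 0 < h) {k : ℕ} {t : ℝ}
    (hne : ozTent r h k t ≠ 0) : |t - (-r + k * h)| ≤ h := by
  rw [abs_le]
  by_contra hcon
  push_neg at hcon
  apply hne
  unfold ozTent
  rcases le_or_gt (-h) (t - (-r + k * h)) with h1 | h1
  · have h2 := hcon h1
    rw [ozGstep_eq_zero r h hh (k := k + 1) (t := t) (by push_cast; linarith),
      ozGstep_eq_zero r h hh (k := k) (t := t) (by linarith)]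
    ring
  · have ht : t ≤ -r + k * h - h := by linarith
    rw [ozGstep_eq_one r h hh (k := k + 1) (t := t) (by push_cast; linarith),
      ozGstep_eq_one r h hh (k := k) (t := t) ht]
    ring

lemma ozTent_sum (r h : ℝ) (hh : 0 < h) (n : ℕ) {t : ℝ}
    (ht1 : -r ≤ t) (ht2 : t ≤ -r + n * h) :
    ∑ k ∈ Finset.range (n + 1), ozTent r h k t = 1 := by
  have := Finset.sum_range_sub (f := fun k => ozGstep r h k t) (n + 1)
  unfold ozTent
  rw [this, ozGstep_eq_one r h hh (k := n + 1) (t := t) (by push_cast; linarith),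
    ozGstep_eq_zero r h hh (k := 0) (t := t) (by push_cast; linarith)]
  ring

lemma ozTent_weighted_close (r h : ℝ) (hh : 0 < h) (n : ℕ) (c : ℕ → ℝ) (v B : ℝ) {t : ℝ}
    (ht1 : -r ≤ t) (ht2 : t ≤ -r + n * h)
    (hc : ∀ k ≤ n, ozTent r h k t ≠ 0 → |c k - v| ≤ B) :
    |(∑ k ∈ Finset.range (n + 1), c k * ozTent r h k t) - v| ≤ B := by
  have hsum := ozTent_sum r h hh n ht1 ht2
  have hv : v = ∑ k ∈ Finset.range (n + 1), v * ozTent r h k t := by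
    rw [← Finset.mul_sum, hsum, mul_one]
  calc |(∑ k ∈ Finset.range (n + 1), c k * ozTent r h k t) - v|
      = |∑ k ∈ Finset.range (n + 1), (c k - v) * ozTent r h k t| := by
        rw [Finset.sum_congr rfl (fun k _ => sub_mul (c k) v (ozTent r h k t)),
          Finset.sum_sub_distrib]
        congr 1
        rw [← hv]
    _ ≤ ∑ k ∈ Finset.range (n + 1), |(c k - v) * ozTent r h k t| :=
        Finset.abs_sum_le_sum_abs _ _
    _ ≤ ∑ k ∈ Finset.range (n + 1), B * ozTent r h k t := by
        refine Finset.sum_le_sum fun k hk => ?_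
        rw [abs_mul, abs_of_nonneg (ozTent_nonneg r h hh k t)]
        rcases eq_or_ne (ozTent r h k t) 0 with h0 | h0
        · simp [h0]
        · exact mul_le_mul_of_nonneg_right
            (hc k (Nat.lt_succ_iff.mp (Finset.mem_range.mp hk)) h0)
            (ozTent_nonneg r h hh k t)
    _ = B := by rw [← Finset.mul_sum, hsum, mul_one]

lemma ozawa_approx {M : Type*} [CStarAlgebra M] [PartialOrder M] [StarOrderedRing M]
    {a : M} (ha : IsSelfAdjoint a) {ε : ℝ} (hε : 0 < ε) :
    ∃ (m : ℕ) (lam : Fin m → ℝ) (p : Fin m → M),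
      (∀ i, 0 ≤ p i) ∧ (∑ i, p i) ≤ 1 ∧
      ‖(∑ i, lam i • p i) - a‖ ≤ ε ∧ ‖(∑ i, (lam i)^2 • p i) - a * a‖ ≤ ε := by
  set r : ℝ := ‖a‖ * ‖(1 : M)‖ + 1 with hr_def
  have hr : 1 ≤ r := le_add_of_nonneg_left (mul_nonneg (norm_nonneg _) (norm_nonneg _))
  have hr0 : 0 < r := lt_of_lt_of_le one_pos hr
  have hspec : ∀ t ∈ spectrum ℝ a, -r ≤ t ∧ t ≤ r := by
    intro t ht
    have h1 := spectrum.norm_le_norm_mul_of_mem ht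
    rw [Real.norm_eq_abs] at h1
    constructor
    · nlinarith [neg_abs_le t]
    · nlinarith [le_abs_self t]
  obtain ⟨m0, hm0⟩ := exists_nat_gt (4 * r ^ 2 / ε)
  set n : ℕ := m0 + 1 with hn_def
  have hnpos : (0 : ℝ) < n := by positivity
  have hn : 4 * r ^ 2 / ε < n := hm0.trans_le (by exact_mod_cast Nat.le_succ m0)
  set h : ℝ := 2 * r / n with hh_def
  have hh : 0 < h := by positivity
  have hnh : (n : ℝ) * h = 2 * r := by
    rw [hh_def, mul_comm, div_mul_cancel₀ _ hnpos.ne']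
  have h2rh : 2 * r * h ≤ ε := by
    rw [div_lt_iff₀ hε] at hn
    have he : 2 * r * h = 4 * r ^ 2 / (n : ℝ) := by rw [hh_def]; field_simp; ring
    rw [he, div_le_iff₀ hnpos]
    nlinarith
  have hhe : h ≤ ε := by nlinarith
  have hcont : ∀ k : ℕ, ContinuousOn (ozTent r h k) (spectrum ℝ a) :=
    fun k => (ozTent_continuous r h k).continuousOn
  -- the quantities
  set lam : Fin (n + 1) → ℝ := fun i => -r + (i : ℕ) * h with hlam_def
  set p : Fin (n + 1) → M := fun i => cfc (ozTent r h (i : ℕ)) a with hp_def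
  have hlam_mem : ∀ i : Fin (n + 1), -r ≤ lam i ∧ lam i ≤ r := by
    intro i
    have h1 : (0:ℝ) ≤ (i : ℕ) * h := by positivity
    have h2 : ((i : ℕ) : ℝ) * h ≤ n * h := by
      have : ((i : ℕ) : ℝ) ≤ n := by exact_mod_cast Nat.lt_succ_iff.mp i.isLt
      nlinarith
    rw [hnh] at h2
    refine ⟨?_, ?_⟩
    · simp only [hlam_def]; linarith
    · simp only [hlam_def]; linarith
  refine ⟨n + 1, lam, p, ?_, ?_, ?_, ?_⟩
  · exact fun i => cfc_nonneg fun t _ => ozTent_nonneg r h hh _ t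
  · have e1 : (∑ i, p i) = cfc (fun t => ∑ k ∈ Finset.range (n + 1), ozTent r h k t) a := by
      rw [Fin.sum_univ_eq_sum_range (fun k => cfc (ozTent r h k) a) (n + 1),
        ← cfc_sum (fun k : ℕ => ozTent r h k) a (Finset.range (n + 1)) (fun k _ => hcont k)]
      exact cfc_congr fun t _ => Finset.sum_apply t (Finset.range (n + 1)) _
    have e2 : (∑ i, p i) = 1 := by
      rw [e1]
      calc cfc (fun t => ∑ k ∈ Finset.range (n + 1), ozTent r h k t) a
          = cfc (fun _ : ℝ => (1:ℝ)) a := by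
            refine cfc_congr fun t ht => ?_
            obtain ⟨h1, h2⟩ := hspec t ht
            exact ozTent_sum r h hh n h1 (by rw [show -r + n*h = r by rw [hnh]; ring]; exact h2)
        _ = 1 := cfc_const_one ℝ a
    exact e2.le
  · have e1 : (∑ i, lam i • p i)
        = cfc (fun t => ∑ k ∈ Finset.range (n + 1), (-r + k * h) * ozTent r h k t) a := by
      rw [Fin.sum_univ_eq_sum_range (fun k => (-r + k * h) • cfc (ozTent r h k) a) (n + 1)]
      rw [Finset.sum_congr rfl
        (fun (k : ℕ) _ => (cfc_const_mul (-r + (k : ℝ) * h) (ozTent r h k) a (hcont k)).symm)]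
      rw [← cfc_sum (fun k : ℕ => fun t => (-r + k * h) * ozTent r h k t) a (Finset.range (n + 1))
        (fun k _ => (continuous_const.mul (ozTent_continuous r h k)).continuousOn)]
      exact cfc_congr fun t _ => Finset.sum_apply t (Finset.range (n + 1)) _
    have e3 : cfc (fun t => (∑ k ∈ Finset.range (n + 1), (-r + k * h) * ozTent r h k t) - t) a
        = (∑ i, lam i • p i) - a := by
      rw [cfc_sub (fun t => ∑ k ∈ Finset.range (n + 1), (-r + k * h) * ozTent r h k t)
        (fun t => t) a
        (continuous_finset_sum _ (fun k _ => continuous_const.mul (ozTent_continuous r h k))).continuousOn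
        continuous_id.continuousOn, cfc_id' ℝ a, e1]
    rw [← e3]
    refine norm_cfc_le hε.le fun t ht => ?_
    obtain ⟨h1, h2⟩ := hspec t ht
    rw [Real.norm_eq_abs]
    refine (ozTent_weighted_close r h hh n _ t h h1 (by rw [show -r + n*h = r by rw [hnh]; ring]; exact h2) ?_).trans hhe
    intro k hk h0
    have := ozTent_support r h hh h0
    rw [abs_sub_comm] at this
    exact this
  · have e1 : (∑ i, (lam i)^2 • p i)
        = cfc (fun t => ∑ k ∈ Finset.range (n + 1), (-r + k * h)^2 * ozTent r h k t) a := by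
      rw [Fin.sum_univ_eq_sum_range (fun k => ((-r + k * h):ℝ)^2 • cfc (ozTent r h k) a) (n + 1)]
      rw [Finset.sum_congr rfl
        (fun (k : ℕ) _ => (cfc_const_mul ((-r + (k : ℝ) * h)^2) (ozTent r h k) a (hcont k)).symm)]
      rw [← cfc_sum (fun k : ℕ => fun t => (-r + k * h)^2 * ozTent r h k t) a (Finset.range (n + 1))
        (fun k _ => (continuous_const.mul (ozTent_continuous r h k)).continuousOn)]
      exact cfc_congr fun t _ => Finset.sum_apply t (Finset.range (n + 1)) _
    have e2 : a * a = cfc (fun t : ℝ => t * t) a := by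
      conv_lhs => rw [← cfc_id' ℝ a]
      exact (cfc_mul (fun t : ℝ => t) (fun t : ℝ => t) a
        continuous_id.continuousOn continuous_id.continuousOn).symm
    have e3 : cfc (fun t => (∑ k ∈ Finset.range (n + 1), (-r + k * h)^2 * ozTent r h k t) - t * t) a
        = (∑ i, (lam i)^2 • p i) - a * a := by
      rw [cfc_sub (fun t => ∑ k ∈ Finset.range (n + 1), (-r + k * h)^2 * ozTent r h k t)
        (fun t => t * t) a
        (continuous_finset_sum _ (fun k _ => continuous_const.mul (ozTent_continuous r h k))).continuousOn
        (continuous_id.mul continuous_id).continuousOn, e1, ← e2]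
    rw [← e3]
    refine norm_cfc_le hε.le fun t ht => ?_
    obtain ⟨h1, h2⟩ := hspec t ht
    rw [Real.norm_eq_abs]
    refine (ozTent_weighted_close r h hh n _ (t*t) (2*r*h) h1
      (by rw [show -r + n*h = r by rw [hnh]; ring]; exact h2) ?_).trans h2rh
    intro k hk h0
    have hsupp := ozTent_support r h hh h0
    rw [abs_sub_comm] at hsupp
    have hkn : (k : ℝ) ≤ n := by exact_mod_cast hk
    have hkh : (k : ℝ) * h ≤ 2 * r := by nlinarith
    have hk0 : (0 : ℝ) ≤ (k : ℝ) * h := by positivity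
    have hfact : (-r + k * h) ^ 2 - t * t = ((-r + k * h) - t) * ((-r + k * h) + t) := by ring
    rw [hfact, abs_mul]
    have habs2 : |(-r + k * h) + t| ≤ 2 * r := by
      rw [abs_le]; constructor <;> linarith
    calc |(-r + k * h) - t| * |(-r + k * h) + t| ≤ h * (2 * r) :=
          mul_le_mul hsupp habs2 (abs_nonneg _) hh.le
      _ = 2 * r * h := by ring

lemma ozawa_map_selfAdjoint {M N : Type*} [CStarAlgebra M] [CStarAlgebra N]
    [PartialOrder M] [StarOrderedRing M] [PartialOrder N] [StarOrderedRing N]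
    (φ : M →L[ℂ] N) (hpos : ∀ a : M, 0 ≤ a → 0 ≤ φ a)
    {a : M} (ha : IsSelfAdjoint a) : IsSelfAdjoint (φ a) := by
  have hdec := CFC.posPart_sub_negPart a ha
  rw [← hdec, map_sub]
  exact ((hpos _ (CFC.posPart_nonneg a)).isSelfAdjoint).sub
    ((hpos _ (CFC.negPart_nonneg a)).isSelfAdjoint)

lemma ozawa_kadison {M N : Type*} [CStarAlgebra M] [CStarAlgebra N]
    [PartialOrder M] [StarOrderedRing M] [PartialOrder N] [StarOrderedRing N]
    (φ : M →L[ℂ] N) (hpos : ∀ a : M, 0 ≤ a → 0 ≤ φ a) (hcontr : ‖φ‖ ≤ 1)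
    {a : M} (ha : IsSelfAdjoint a) : φ a * φ a ≤ φ (a * a) := by
  have hφ1 : φ 1 ≤ 1 := by
    have h1 : (0:N) ≤ φ 1 := hpos 1 zero_le_one
    have hM1 : ‖(1 : M)‖ ≤ 1 := by
      have h := CStarRing.norm_star_mul_self (x := (1 : M))
      rw [star_one, one_mul] at h
      nlinarith [norm_nonneg (1 : M)]
    have h2 : ‖φ 1‖ ≤ 1 := by
      calc ‖φ 1‖ ≤ ‖φ‖ * ‖(1:M)‖ := φ.le_opNorm 1
        _ ≤ 1 * 1 := mul_le_mul hcontr hM1 (norm_nonneg _) zero_le_one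
        _ = 1 := one_mul 1
    refine (IsSelfAdjoint.le_algebraMap_norm_self h1.isSelfAdjoint).trans ?_
    rw [← sub_nonneg, show (1:N) - algebraMap ℝ N ‖φ 1‖ = (1 - ‖φ 1‖) • 1 by
      rw [Algebra.algebraMap_eq_smul_one, sub_smul, one_smul]]
    exact smul_nonneg (by linarith) zero_le_one
  have hmono : ∀ u v : M, u ≤ v → φ u ≤ φ v := by
    intro u v huv
    have h := hpos (v - u) (sub_nonneg.2 huv)
    rw [map_sub] at h
    exact sub_nonneg.1 h
  have key : ∀ ε : ℝ, 0 < ε → φ a * φ a ≤ φ (a * a) + ε • 1 := by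
    intro ε hε
    set K : ℝ := 2 * ‖φ a‖ + 2 with hK
    have hK0 : 0 < K := by positivity
    have hε'0 : (0:ℝ) < min 1 (ε / K) := lt_min one_pos (by positivity)
    obtain ⟨m, lam, p, hp, hps, hn1, hn2⟩ := ozawa_approx ha hε'0
    set ε' : ℝ := min 1 (ε / K) with hε'_def
    have hε'1 : ε' ≤ 1 := min_le_left _ _
    have hε'K : ε' * K ≤ ε := (le_div_iff₀ hK0).mp (min_le_right _ _)
    have hφsmul : ∀ (t : ℝ) (z : M), φ (t • z) = t • φ z := fun t z =>
      φ.map_smul_of_tower t z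
    set b : N := ∑ i, lam i • φ (p i) with hb_def
    have hb_eq : b = φ (∑ i, lam i • p i) := by
      rw [map_sum]
      exact Finset.sum_congr rfl fun i _ => (hφsmul (lam i) (p i)).symm
    have hc_eq : (∑ i, (lam i)^2 • φ (p i)) = φ (∑ i, (lam i)^2 • p i) := by
      rw [map_sum]
      exact Finset.sum_congr rfl fun i _ => (hφsmul ((lam i)^2) (p i)).symm
    have hA : b * b ≤ φ (∑ i, (lam i)^2 • p i) := by
      rw [hb_def, ← hc_eq]
      refine ozawa_aux_sq_le (fun i => φ (p i)) lam (fun i => hpos _ (hp i)) ?_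
      rw [← map_sum]
      exact (hmono _ _ hps).trans hφ1
    have hφnorm : ∀ z : M, ‖φ z‖ ≤ ‖z‖ := fun z => by
      calc ‖φ z‖ ≤ ‖φ‖ * ‖z‖ := φ.le_opNorm z
        _ ≤ 1 * ‖z‖ := mul_le_mul_of_nonneg_right hcontr (norm_nonneg _)
        _ = ‖z‖ := one_mul _
    have hbφ : ‖φ a - b‖ ≤ ε' := by
      rw [hb_eq, ← map_sub]
      exact (hφnorm _).trans (by rw [norm_sub_rev]; exact hn1)
    have hcφ : ‖φ (∑ i, (lam i)^2 • p i) - φ (a*a)‖ ≤ ε' := by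
      rw [← map_sub]
      exact (hφnorm _).trans hn2
    have hbnorm : ‖b‖ ≤ ‖φ a‖ + ε' := by
      calc ‖b‖ = ‖φ a - (φ a - b)‖ := by rw [sub_sub_cancel]
        _ ≤ ‖φ a‖ + ‖φ a - b‖ := norm_sub_le _ _
        _ ≤ ‖φ a‖ + ε' := add_le_add le_rfl hbφ
    have hsq : ‖φ a * φ a - b * b‖ ≤ ε' * (2 * ‖φ a‖ + 1) := by
      rw [show φ a * φ a - b * b = φ a * (φ a - b) + (φ a - b) * b by noncomm_ring]
      calc ‖φ a * (φ a - b) + (φ a - b) * b‖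
          ≤ ‖φ a * (φ a - b)‖ + ‖(φ a - b) * b‖ := norm_add_le _ _
        _ ≤ ‖φ a‖ * ‖φ a - b‖ + ‖φ a - b‖ * ‖b‖ :=
            add_le_add (norm_mul_le _ _) (norm_mul_le _ _)
        _ ≤ ε' * (2 * ‖φ a‖ + 1) := by
            nlinarith [norm_nonneg (φ a), norm_nonneg b, norm_nonneg (φ a - b), hε'0.le]
    -- self-adjointness facts
    have hφa : IsSelfAdjoint (φ a) := ozawa_map_selfAdjoint φ hpos ha
    have hbsa : IsSelfAdjoint b := by
      rw [hb_def, IsSelfAdjoint, star_sum]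
      exact Finset.sum_congr rfl fun i _ => by
        rw [star_smul, star_trivial, (hpos _ (hp i)).isSelfAdjoint.star_eq]
    have hsq_sa : IsSelfAdjoint (φ a * φ a - b * b) := by
      refine IsSelfAdjoint.sub ?_ ?_ <;> rw [IsSelfAdjoint, star_mul]
      · rw [hφa.star_eq]
      · rw [hbsa.star_eq]
    have hdiff_sa : IsSelfAdjoint (φ (∑ i, (lam i)^2 • p i) - φ (a*a)) := by
      refine IsSelfAdjoint.sub ?_ ?_
      · refine ozawa_map_selfAdjoint φ hpos ?_
        rw [IsSelfAdjoint, star_sum]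
        exact Finset.sum_congr rfl fun i _ => by
          rw [star_smul, star_trivial, (hp i).isSelfAdjoint.star_eq]
      · exact ozawa_map_selfAdjoint φ hpos (by rw [IsSelfAdjoint, star_mul, ha.star_eq])
    have h5 : φ a * φ a - b * b ≤ ‖φ a * φ a - b * b‖ • 1 := by
      refine (IsSelfAdjoint.le_algebraMap_norm_self hsq_sa).trans_eq ?_
      rw [Algebra.algebraMap_eq_smul_one]
    have h6 : φ (∑ i, (lam i)^2 • p i) - φ (a*a)
        ≤ ‖φ (∑ i, (lam i)^2 • p i) - φ (a*a)‖ • 1 := by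
      refine (IsSelfAdjoint.le_algebraMap_norm_self hdiff_sa).trans_eq ?_
      rw [Algebra.algebraMap_eq_smul_one]
    -- assemble
    have step1 : φ a * φ a ≤ φ (∑ i, (lam i)^2 • p i) + ‖φ a * φ a - b * b‖ • 1 := by
      have := add_le_add hA h5
      calc φ a * φ a = b * b + (φ a * φ a - b * b) := by abel
        _ ≤ φ (∑ i, (lam i)^2 • p i) + ‖φ a * φ a - b * b‖ • 1 := this
    have step2 : φ (∑ i, (lam i)^2 • p i) ≤ φ (a*a)
        + ‖φ (∑ i, (lam i)^2 • p i) - φ (a*a)‖ • 1 := by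
      have := add_le_add (le_refl (φ (a*a))) h6
      calc φ (∑ i, (lam i)^2 • p i)
          = φ (a*a) + (φ (∑ i, (lam i)^2 • p i) - φ (a*a)) := by abel
        _ ≤ _ := this
    have step3 : φ a * φ a ≤ φ (a*a)
        + (‖φ (∑ i, (lam i)^2 • p i) - φ (a*a)‖ + ‖φ a * φ a - b * b‖) • 1 := by
      refine step1.trans ?_
      rw [add_smul]
      calc φ (∑ i, (lam i)^2 • p i) + ‖φ a * φ a - b * b‖ • 1
          ≤ (φ (a*a) + ‖φ (∑ i, (lam i)^2 • p i) - φ (a*a)‖ • 1)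
            + ‖φ a * φ a - b * b‖ • 1 := add_le_add step2 le_rfl
        _ = _ := by abel
    refine step3.trans ?_
    rw [← sub_nonneg, show φ (a*a) + ε • 1 - (φ (a*a)
        + (‖φ (∑ i, (lam i)^2 • p i) - φ (a*a)‖ + ‖φ a * φ a - b * b‖) • 1)
        = (ε - (‖φ (∑ i, (lam i)^2 • p i) - φ (a*a)‖ + ‖φ a * φ a - b * b‖)) • 1 by
      rw [sub_smul]; abel]
    refine smul_nonneg ?_ zero_le_one
    have : ε' + ε' * (2 * ‖φ a‖ + 1) = ε' * K := by rw [hK]; ring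
    nlinarith [hcφ, hsq]
  have hlim : Filter.Tendsto (fun k : ℕ => φ (a*a) + (1/(k+1) : ℝ) • (1:N))
      Filter.atTop (nhds (φ (a*a))) := by
    have h0 : Filter.Tendsto (fun k : ℕ => (1/(k+1) : ℝ)) Filter.atTop (nhds 0) :=
      tendsto_one_div_add_atTop_nhds_zero_nat
    have := (h0.smul_const (1:N)).const_add (φ (a*a))
    simpa using this
  exact ge_of_tendsto' hlim fun k => key _ (by positivity)

lemma ozawa_jordan {A : Type*} [CStarAlgebra A] (c d y : A) (hc : IsSelfAdjoint c)
    (hd : IsSelfAdjoint d) (hy : y = c + Complex.I • d) :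
    (1/2 : ℂ) • (star y * y + y * star y) = c * c + d * d := by
  have hstar : star y = c - Complex.I • d := by
    rw [hy, star_add, star_smul, hc.star_eq, hd.star_eq, Complex.star_def, Complex.conj_I,
      neg_smul, ← sub_eq_add_neg]
  rw [hstar, hy]
  simp only [mul_add, add_mul, mul_sub, sub_mul, smul_mul_assoc, mul_smul_comm, smul_smul,
    smul_add, smul_sub, Complex.I_mul_I]
  module

/-- Ozawa's Schwarz-type inequality for contractive positive maps between unital
C*-algebras, with the Jordan product `a ∘ b = (ab + ba)/2`. -/
theorem stmt_0 {M N : Type*} [CStarAlgebra M] [CStarAlgebra N]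
    [PartialOrder M] [StarOrderedRing M] [PartialOrder N] [StarOrderedRing N]
    (φ : M →L[ℂ] N)
    (hpos : ∀ a : M, 0 ≤ a → 0 ≤ φ a)
    (hcontr : ‖φ‖ ≤ 1) (x : M) :
    (1/2 : ℂ) • (star (φ x) * φ x + φ x * star (φ x)) ≤
      φ ((1/2 : ℂ) • (star x * x + x * star x)) := by
  set c : M := (realPart x : M) with hc_def
  set d : M := (imaginaryPart x : M) with hd_def
  have hx : x = c + Complex.I • d := (realPart_add_I_smul_imaginaryPart x).symm
  have hc : IsSelfAdjoint c := (realPart x).2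
  have hd : IsSelfAdjoint d := (imaginaryPart x).2
  have hφc : IsSelfAdjoint (φ c) := ozawa_map_selfAdjoint φ hpos hc
  have hφd : IsSelfAdjoint (φ d) := ozawa_map_selfAdjoint φ hpos hd
  have hφx : φ x = φ c + Complex.I • φ d := by rw [hx, map_add, map_smul]
  rw [ozawa_jordan (φ c) (φ d) (φ x) hφc hφd hφx,
    ozawa_jordan c d x hc hd hx, map_add]
  exact add_le_add (ozawa_kadison φ hpos hcontr hc) (ozawa_kadison φ hpos hcontr hd)
end

section
/- Let M and N be unital C*-algebras and let φ : M → N be a positive linear map (not necessarily contractive). Then for every x ∈ M, φ(x)* ∘ φ(x) ≤ ‖φ‖ · φ(x* ∘ x), where a ∘ b = (ab + ba)/2. -/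
/-!
Writing `x = ℜ x + i ℑ x`, both sides of the inequality split as sums of the corresponding
expressions for the self-adjoint elements `ℜ x` and `ℑ x`, so it suffices to prove Kadison's
inequality `φ(a)² ≤ k φ(a²)` for self-adjoint `a`, whenever `φ(1) ≤ k`.

For `p_i ≥ 0` with `∑ p_i ≤ k` and `b = ∑ λ_i p_i`, expanding
`0 ≤ ∑ (b - k λ_i) p_i (b - k λ_i)` gives `b² ≤ k ∑ λ_i² p_i`. Apply this to
`p_i = φ(e_i(a))`, where the `e_i` are the Bernstein basis polynomials of degree `n` on an interval
`[-R, R]` containing the spectrum of `a` and the `λ_i` are the equally spaced nodes: the `e_i` form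
a partition of unity with mean `t` and variance at most `R² / n`, so `∑ λ_i p_i = φ(a)` and
`∑ λ_i² p_i ≤ φ(a²) + (R² / n) φ(1)`. Then let `n → ∞`.
-/

open scoped ComplexStarModule
open Filter Topology Set Polynomial

section OrderedCStarAlgebra

variable {A : Type*} [CStarAlgebra A] [PartialOrder A] [StarOrderedRing A]

lemma le_of_forall_pos_le_add_smul_one {x y : A} (h : ∀ ε : ℝ, 0 < ε → x ≤ y + ε • 1) :
    x ≤ y := by
  have hlim : Tendsto (fun ε : ℝ => y + ε • (1 : A)) (𝓝[>] 0) (𝓝 y) := by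
    have : Continuous fun ε : ℝ => y + ε • (1 : A) := by fun_prop
    simpa using (this.tendsto 0).mono_left nhdsWithin_le_nhds
  exact ge_of_tendsto hlim (eventually_nhdsWithin_of_forall h)

lemma sum_smul_mul_sum_smul_le {ι : Type*} (s : Finset ι) {p : ι → A} (l : ι → ℝ) {k : ℝ}
    (hk : 0 < k) (hp : ∀ i ∈ s, 0 ≤ p i) (hsum : ∑ i ∈ s, p i ≤ k • 1) :
    (∑ i ∈ s, l i • p i) * (∑ i ∈ s, l i • p i) ≤ k • ∑ i ∈ s, l i ^ 2 • p i := by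
  set b := ∑ i ∈ s, l i • p i
  set q := ∑ i ∈ s, l i ^ 2 • p i
  have hb : IsSelfAdjoint b :=
    isSelfAdjoint_sum s fun i hi => .smul (.all (l i)) (.of_nonneg (hp i hi))
  have hterm (i : ι) : star (b - (k * l i) • 1) * p i * (b - (k * l i) • 1) =
      b * p i * b - k • (b * (l i • p i) + (l i • p i) * b) + (k * k) • (l i ^ 2 • p i) := by
    simp only [star_sub, star_smul, star_one, hb.star_eq, star_trivial, sub_mul, mul_sub,
      smul_mul_assoc, mul_smul_comm, one_mul, mul_one]
    module
  have hexpand : ∑ i ∈ s, star (b - (k * l i) • 1) * p i * (b - (k * l i) • 1) =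
      b * (∑ i ∈ s, p i) * b - k • (b * b + b * b) + (k * k) • q := by
    simp only [hterm, Finset.sum_add_distrib, Finset.sum_sub_distrib, ← Finset.smul_sum,
      ← Finset.mul_sum, ← Finset.sum_mul, smul_add]
    rfl
  have hconj : b * (∑ i ∈ s, p i) * b ≤ k • (b * b) := by
    simpa [hb.star_eq] using star_left_conjugate_le_conjugate hsum b
  have h0 : 0 ≤ k • (k • q - b * b) := by
    calc (0 : A) ≤ b * (∑ i ∈ s, p i) * b - k • (b * b + b * b) + (k * k) • q :=
          hexpand ▸ Finset.sum_nonneg fun i hi => star_left_conjugate_nonneg (hp i hi) _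
      _ ≤ k • (b * b) - k • (b * b + b * b) + (k * k) • q := by gcongr
      _ = k • (k • q - b * b) := by module
  exact sub_nonneg.1 (nonneg_of_smul_nonneg_of_pos_left h0 hk)

end OrderedCStarAlgebra

lemma Finset.sum_sq_mul_eq_sq_add_sum_sub_sq_mul {ι : Type*} (s : Finset ι) (l w : ι → ℝ) {t : ℝ}
    (hw : ∑ i ∈ s, w i = 1) (hl : ∑ i ∈ s, l i * w i = t) :
    ∑ i ∈ s, l i ^ 2 * w i = t ^ 2 + ∑ i ∈ s, (l i - t) ^ 2 * w i := by
  have h (i : ι) : l i ^ 2 * w i = (l i - t) ^ 2 * w i + 2 * t * (l i * w i) - t ^ 2 * w i := by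
    ring
  simp only [h, Finset.sum_add_distrib, Finset.sum_sub_distrib, ← Finset.mul_sum, hw, hl]
  ring

section Bernstein

lemma bernsteinPolynomial_eval_nonneg (n ν : ℕ) {x : ℝ} (hx : x ∈ Icc (0 : ℝ) 1) :
    0 ≤ (bernsteinPolynomial ℝ n ν).eval x :=
  bernstein_nonneg (x := ⟨x, hx⟩)

lemma bernsteinPolynomial_sum_eval (n : ℕ) (x : ℝ) :
    ∑ ν ∈ Finset.range (n + 1), (bernsteinPolynomial ℝ n ν).eval x = 1 := by
  simpa [eval_finsetSum] using congr_arg (eval x) (bernsteinPolynomial.sum ℝ n)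

lemma bernsteinPolynomial_sum_mul_eval (n : ℕ) (x : ℝ) :
    ∑ ν ∈ Finset.range (n + 1), ν * (bernsteinPolynomial ℝ n ν).eval x = n * x := by
  simpa [eval_finsetSum] using congr_arg (eval x) (bernsteinPolynomial.sum_smul ℝ n)

lemma bernsteinPolynomial_variance_eval (n : ℕ) (x : ℝ) :
    ∑ ν ∈ Finset.range (n + 1), (n * x - ν) ^ 2 * (bernsteinPolynomial ℝ n ν).eval x =
      n * x * (1 - x) := by
  simpa [eval_finsetSum] using congr_arg (eval x) (bernsteinPolynomial.variance ℝ n)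

noncomputable def bernsteinWeight (R : ℝ) (n ν : ℕ) (t : ℝ) : ℝ :=
  (bernsteinPolynomial ℝ n ν).eval ((t + R) / (2 * R))

noncomputable def bernsteinNode (R : ℝ) (n ν : ℕ) : ℝ := 2 * R / n * ν - R

namespace bernsteinWeight

variable {R : ℝ} {n : ℕ}

lemma continuous (R : ℝ) (n ν : ℕ) : Continuous (bernsteinWeight R n ν) := by
  unfold bernsteinWeight
  fun_prop

lemma nonneg (hR : 0 < R) (ν : ℕ) {t : ℝ} (ht : t ∈ Icc (-R) R) :
    0 ≤ bernsteinWeight R n ν t := by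
  refine bernsteinPolynomial_eval_nonneg n ν ⟨by rw [le_div_iff₀] <;> linarith [ht.1], ?_⟩
  rw [div_le_one] <;> linarith [ht.2]

lemma sum_eq_one (R : ℝ) (n : ℕ) (t : ℝ) :
    ∑ ν ∈ Finset.range (n + 1), bernsteinWeight R n ν t = 1 :=
  bernsteinPolynomial_sum_eval n _

lemma sum_node_mul (hR : 0 < R) (hn : 0 < n) (t : ℝ) :
    ∑ ν ∈ Finset.range (n + 1), bernsteinNode R n ν * bernsteinWeight R n ν t = t := by
  simp only [bernsteinNode, bernsteinWeight, sub_mul, mul_assoc, Finset.sum_sub_distrib,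
    ← Finset.mul_sum, bernsteinPolynomial_sum_mul_eval, bernsteinPolynomial_sum_eval]
  field_simp
  ring

lemma sum_node_sq_mul_le (hR : 0 < R) (hn : 0 < n) (t : ℝ) :
    ∑ ν ∈ Finset.range (n + 1), bernsteinNode R n ν ^ 2 * bernsteinWeight R n ν t ≤
      t ^ 2 + R ^ 2 / n := by
  set x := (t + R) / (2 * R)
  have hnode (ν : ℕ) : (bernsteinNode R n ν - t) ^ 2 = (2 * R / n) ^ 2 * (n * x - ν) ^ 2 := by
    simp only [bernsteinNode, x]
    field_simp
    ring
  rw [Finset.sum_sq_mul_eq_sq_add_sum_sub_sq_mul _ _ _ (sum_eq_one R n t) (sum_node_mul hR hn t)]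
  simp only [hnode, mul_assoc, ← Finset.mul_sum, bernsteinWeight]
  rw [bernsteinPolynomial_variance_eval]
  have hx : x * (1 - x) ≤ 1 / 4 := by nlinarith [sq_nonneg (2 * x - 1)]
  calc t ^ 2 + (2 * R / n) ^ 2 * (n * x * (1 - x)) = t ^ 2 + 4 * R ^ 2 / n * (x * (1 - x)) := by
        field_simp
        ring
    _ ≤ t ^ 2 + 4 * R ^ 2 / n * (1 / 4) := by gcongr
    _ = t ^ 2 + R ^ 2 / n := by ring

end bernsteinWeight

end Bernstein

lemma half_smul_star_mul_self_add_self_mul_star {A : Type*} [NonUnitalNonAssocRing A] [StarRing A]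
    [Module ℂ A] [IsScalarTower ℂ A A] [SMulCommClass ℂ A A] [StarModule ℂ A] (x : A) :
    (1 / 2 : ℂ) • (star x * x + x * star x) = ℜ x * ℜ x + ℑ x * ℑ x := by
  rw [star_mul_self_add_self_mul_star]
  module

lemma ContinuousLinearMap.apply_one_le_opNorm_smul_one {M N : Type*} [CStarAlgebra M]
    [CStarAlgebra N] [PartialOrder M] [StarOrderedRing M] [PartialOrder N] [StarOrderedRing N]
    (φ : M →L[ℂ] N) (hpos : ∀ a : M, 0 ≤ a → 0 ≤ φ a) : φ 1 ≤ ‖φ‖ • 1 := by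
  have hone : ‖(1 : M)‖ ≤ 1 := by
    rcases subsingleton_or_nontrivial M with hM | hM
    · simp [Subsingleton.elim (1 : M) 0]
    · simp
  calc φ 1 ≤ ‖φ 1‖ • 1 := by
        simpa [Algebra.algebraMap_eq_smul_one] using
          (IsSelfAdjoint.of_nonneg (hpos 1 zero_le_one)).le_algebraMap_norm_self
    _ ≤ ‖φ‖ • 1 := by
        gcongr
        simpa using φ.le_opNorm_of_le hone

namespace PositiveLinearMap

variable {M N : Type*} [CStarAlgebra M] [CStarAlgebra N] [PartialOrder M] [PartialOrder N]

lemma sum_smul_map_cfc (f : M →ₚ[ℂ] N) (a : M) {ι : Type*} (s : Finset ι) (c : ι → ℝ)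
    {e : ι → ℝ → ℝ} (he : ∀ i ∈ s, ContinuousOn (e i) (spectrum ℝ a)) :
    ∑ i ∈ s, c i • f (cfc (e i) a) = f (cfc (fun t => ∑ i ∈ s, c i * e i t) a) := by
  have hfun : (fun t => ∑ i ∈ s, c i * e i t) = ∑ i ∈ s, fun t => c i * e i t := by
    ext t
    simp [Finset.sum_apply]
  rw [hfun, cfc_sum (fun i t => c i * e i t) a s fun i hi => (he i hi).const_smul (c i), map_sum]
  refine Finset.sum_congr rfl fun i hi => ?_
  rw [cfc_const_mul (c i) (e i) a (he i hi), map_smul_of_tower]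

variable [StarOrderedRing M] [StarOrderedRing N]

lemma map_star (f : M →ₚ[ℂ] N) (x : M) : f (star x) = star (f x) := by
  have hre : IsSelfAdjoint (f (ℜ x)) := (ℜ x).2.map' f
  have him : IsSelfAdjoint (f (ℑ x)) := (ℑ x).2.map' f
  conv_lhs => rw [← realPart_add_I_smul_imaginaryPart x]
  conv_rhs => rw [← realPart_add_I_smul_imaginaryPart x]
  simp [map_add, map_smul, hre.star_eq, him.star_eq]

lemma map_realPart (f : M →ₚ[ℂ] N) (x : M) : f (ℜ x) = ℜ (f x) := by
  simp [realPart_apply_coe, map_star, map_smul_of_tower]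

lemma map_imaginaryPart (f : M →ₚ[ℂ] N) (x : M) : f (ℑ x) = ℑ (f x) := by
  simp [imaginaryPart_apply_coe, map_star, map_smul_of_tower]

lemma map_mul_self_le_add_of_moments (f : M →ₚ[ℂ] N) {k : ℝ} (hk : 0 < k) (hf1 : f 1 ≤ k • 1)
    {a : M} (ha : IsSelfAdjoint a) {ι : Type*} (s : Finset ι) (e : ι → ℝ → ℝ) (l : ι → ℝ)
    {ε : ℝ} (hε : 0 ≤ ε) (he : ∀ i ∈ s, ContinuousOn (e i) (spectrum ℝ a))
    (he_nonneg : ∀ i ∈ s, ∀ t ∈ spectrum ℝ a, 0 ≤ e i t)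
    (hsum : ∀ t ∈ spectrum ℝ a, ∑ i ∈ s, e i t = 1)
    (hmean : ∀ t ∈ spectrum ℝ a, ∑ i ∈ s, l i * e i t = t)
    (hsecond : ∀ t ∈ spectrum ℝ a, ∑ i ∈ s, l i ^ 2 * e i t ≤ t ^ 2 + ε) :
    f a * f a ≤ k • f (a * a) + (k * k * ε) • 1 := by
  set p : ι → N := fun i => f (cfc (e i) a)
  have hp : ∀ i ∈ s, 0 ≤ p i := fun i hi => f.map_nonneg (cfc_nonneg (he_nonneg i hi))
  have hp_sum : ∑ i ∈ s, p i = f 1 := by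
    calc ∑ i ∈ s, p i = ∑ i ∈ s, (1 : ℝ) • p i := by simp
      _ = f (cfc (fun _ => (1 : ℝ)) a) := by
        rw [sum_smul_map_cfc f a s _ he, cfc_congr fun t ht => by simpa using hsum t ht]
      _ = f 1 := by rw [cfc_const_one ℝ a]
  have hp_mean : ∑ i ∈ s, l i • p i = f a := by
    rw [sum_smul_map_cfc f a s _ he, cfc_congr hmean, cfc_id' ℝ a]
  have hp_second : ∑ i ∈ s, l i ^ 2 • p i ≤ f (a * a) + ε • f 1 := by
    calc ∑ i ∈ s, l i ^ 2 • p i = f (cfc (fun t => ∑ i ∈ s, l i ^ 2 * e i t) a) :=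
          sum_smul_map_cfc f a s _ he
      _ ≤ f (cfc (fun t => t ^ 2 + ε) a) := OrderHomClass.mono f <|
          cfc_mono hsecond (continuousOn_finsetSum s fun i hi => continuousOn_const.mul (he i hi))
      _ = f (a * a) + ε • f 1 := by
        rw [cfc_add .., cfc_pow_id a 2, cfc_const ε a, Algebra.algebraMap_eq_smul_one, map_add,
          map_smul_of_tower, sq]
  calc f a * f a = (∑ i ∈ s, l i • p i) * (∑ i ∈ s, l i • p i) := by rw [hp_mean]
    _ ≤ k • ∑ i ∈ s, l i ^ 2 • p i := sum_smul_mul_sum_smul_le s l hk hp (hp_sum ▸ hf1)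
    _ ≤ k • (f (a * a) + ε • f 1) := by gcongr
    _ ≤ k • (f (a * a) + ε • k • 1) := by gcongr
    _ = k • f (a * a) + (k * k * ε) • 1 := by module

theorem map_mul_self_le (f : M →ₚ[ℂ] N) {k : ℝ} (hk : 0 < k) (hf1 : f 1 ≤ k • 1) {a : M}
    (ha : IsSelfAdjoint a) : f a * f a ≤ k • f (a * a) := by
  obtain ⟨R, hR, hspec⟩ :=
    (ContinuousFunctionalCalculus.isCompact_spectrum (R := ℝ) a).isBounded.subset_closedBall_lt 0 0
  have hspec' : ∀ t ∈ spectrum ℝ a, t ∈ Icc (-R) R := fun t ht => by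
    simpa [Real.closedBall_eq_Icc] using hspec ht
  refine le_of_forall_pos_le_add_smul_one fun ε hε => ?_
  obtain ⟨n, hn⟩ := exists_nat_gt (k * k * R ^ 2 / ε)
  have hn0 : 0 < n := by exact_mod_cast (by positivity : 0 < k * k * R ^ 2 / ε).trans hn
  calc f a * f a ≤ k • f (a * a) + (k * k * (R ^ 2 / n)) • 1 :=
        map_mul_self_le_add_of_moments f hk hf1 ha (Finset.range (n + 1)) (bernsteinWeight R n)
          (bernsteinNode R n) (by positivity)
          (fun ν _ => (bernsteinWeight.continuous R n ν).continuousOn)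
          (fun ν _ t ht => bernsteinWeight.nonneg hR ν (hspec' t ht))
          (fun t _ => bernsteinWeight.sum_eq_one R n t)
          (fun t _ => bernsteinWeight.sum_node_mul hR hn0 t)
          (fun t _ => bernsteinWeight.sum_node_sq_mul_le hR hn0 t)
    _ ≤ k • f (a * a) + ε • 1 := by
        gcongr
        rw [div_lt_iff₀ hε] at hn
        rw [← mul_div_assoc, div_le_iff₀ (by positivity)]
        linarith

end PositiveLinearMap

/-- Ozawa's Schwarz-type inequality for general (not necessarily contractive)
positive maps between unital C*-algebras:
`φ(x)* ∘ φ(x) ≤ ‖φ‖ · φ(x* ∘ x)` with the Jordan product `a ∘ b = (ab + ba)/2`. -/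
theorem stmt_1 {M N : Type*} [CStarAlgebra M] [CStarAlgebra N]
    [PartialOrder M] [StarOrderedRing M] [PartialOrder N] [StarOrderedRing N]
    (φ : M →L[ℂ] N)
    (hpos : ∀ a : M, 0 ≤ a → 0 ≤ φ a) (x : M) :
    (1/2 : ℂ) • (star (φ x) * φ x + φ x * star (φ x)) ≤
      ‖φ‖ • φ ((1/2 : ℂ) • (star x * x + x * star x)) := by
  rcases (norm_nonneg φ).eq_or_lt with hφ | hφ
  · simp [norm_eq_zero.1 hφ.symm]
  let f : M →ₚ[ℂ] N := .mk₀ φ.toLinearMap hpos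
  have kadison (a : M) (ha : IsSelfAdjoint a) : f a * f a ≤ ‖φ‖ • f (a * a) :=
    f.map_mul_self_le hφ (φ.apply_one_le_opNorm_smul_one hpos) ha
  change (1 / 2 : ℂ) • (star (f x) * f x + f x * star (f x)) ≤
    ‖φ‖ • f ((1 / 2 : ℂ) • (star x * x + x * star x))
  rw [half_smul_star_mul_self_add_self_mul_star, half_smul_star_mul_self_add_self_mul_star,
    map_add, smul_add, ← f.map_realPart, ← f.map_imaginaryPart]
  exact add_le_add (kadison _ (ℜ x).2) (kadison _ (ℑ x).2)
end
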